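/- arXiv:1201.1996 — 2 statements merged into one kernel-verified Lean document; each statement's English description precedes it below -/
import Mathlib

section
/- Let ε > 0 and let (ρ_n)_{n≥1} be a sequence of [0,1]∪{∞}-valued stopping times with P(ρ_n = ∞) ≥ 1 − ε for all n. Then there exist a [0,1]∪{∞}-valued stopping time ρ with P(ρ = ∞) ≥ 1 − 3ε and, for each n ≥ 1, an integer N_n ≥ n and nonnegative convex weights μ_n^n, …, μ_{N_n}^n summing to 1, such that for all n ≥ 1 the pointwise inequality 1_{[0,ρ]} ≤ 2 Σ_{k=n}^{N_n} μ_k^n · 1_{[0,ρ_k]} holds (as functions of (t, ω)). -/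
open MeasureTheory Set Filter Topology

noncomputable section

namespace BD

variable {Ω : Type*} {m0 : MeasurableSpace Ω}

/-- The filtration is right-continuous. -/
def RightContinuousFiltration (ℱ : Filtration ℝ m0) : Prop :=
  ∀ t : ℝ, ℱ t = ⨅ s ∈ Set.Ioi t, ℱ s

/-- `ℱ 0` contains all `P`-null sets. -/
def CompleteFiltration (ℱ : Filtration ℝ m0) (P : Measure Ω) : Prop :=
  ∀ s : Set Ω, P s = 0 → MeasurableSet[ℱ 0] s

/-- The usual conditions: right continuity and completeness. -/
def UsualConditions (ℱ : Filtration ℝ m0) (P : Measure Ω) : Prop :=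
  RightContinuousFiltration ℱ ∧ CompleteFiltration ℱ P

/-- A real function is càdlàg on the time interval `[0,1]`: it is right-continuous on `[0,1)`
and has left limits on `(0,1]`. -/
def IsCadlagFun (f : ℝ → ℝ) : Prop :=
  (∀ t ∈ Set.Ico (0:ℝ) 1, ContinuousWithinAt f (Set.Ici t) t) ∧
  (∀ t ∈ Set.Ioc (0:ℝ) 1, ∃ l : ℝ, Tendsto f (nhdsWithin t (Set.Iio t)) (nhds l))

/-- A process is càdlàg if all its paths are càdlàg on `[0,1]`. -/
def Cadlag (S : ℝ → Ω → ℝ) : Prop := ∀ ω, IsCadlagFun fun t => S t ω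

/-- The process is adapted on the time interval `[0,1]`. -/
def AdaptedOn (ℱ : Filtration ℝ m0) (S : ℝ → Ω → ℝ) : Prop :=
  ∀ t ∈ Set.Icc (0:ℝ) 1, StronglyMeasurable[ℱ t] (S t)

/-- A `[0,1] ∪ {∞}`-valued random time (modelled as a `WithTop ℝ`-valued map) is a stopping
time if `{ρ ≤ t} ∈ ℱ t` for every `t`. -/
def IsStoppingTimeTop (ℱ : Filtration ℝ m0) (ρ : Ω → WithTop ℝ) : Prop :=
  ∀ t : ℝ, MeasurableSet[ℱ t] {ω | ρ ω ≤ (t : WithTop ℝ)}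

/-- The random time takes values in `[0,1] ∪ {∞}`. -/
def ValuedInUnitOrTop (ρ : Ω → WithTop ℝ) : Prop :=
  ∀ ω, ρ ω = ⊤ ∨ ∃ t ∈ Set.Icc (0:ℝ) 1, ρ ω = (t : WithTop ℝ)

/-- The process `S` stopped at the (possibly infinite) random time `ρ`. -/
def stopped (S : ℝ → Ω → ℝ) (ρ : Ω → WithTop ℝ) : ℝ → Ω → ℝ :=
  fun t ω => S (WithTop.untopD t (min (t : WithTop ℝ) (ρ ω))) ω

/-- A simple integrand `H = ∑_{i=1}^k H^i 1_{(τ_i, τ_{i+1}]}` where the `τ_i` are `[0,1]`-valued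
stopping times, increasing in `i`, and `H^i` is bounded and `ℱ_{τ_i}`-measurable. -/
structure SimpleIntegrand (ℱ : Filtration ℝ m0) where
  k : ℕ
  τ : Fin (k + 1) → Ω → ℝ
  τ_mono : ∀ ω, Monotone fun i => τ i ω
  τ_mem : ∀ i ω, τ i ω ∈ Set.Icc (0:ℝ) 1
  τ_stopping : ∀ i, IsStoppingTime ℱ (fun ω => (τ i ω : WithTop ℝ))
  H : Fin k → Ω → ℝ
  H_bdd : ∀ i, ∃ C : ℝ, ∀ ω, |H i ω| ≤ C
  H_meas : ∀ i : Fin k,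
    StronglyMeasurable[(τ_stopping i.castSucc).measurableSpace] (H i)

/-- The value of a simple integrand at time `t`. -/
def SimpleIntegrand.val {ℱ : Filtration ℝ m0} (Hs : SimpleIntegrand ℱ) (t : ℝ) (ω : Ω) : ℝ :=
  ∑ i : Fin Hs.k, if Hs.τ i.castSucc ω < t ∧ t ≤ Hs.τ i.succ ω then Hs.H i ω else 0

/-- `c` is a uniform (sup-norm) bound for the simple integrand. -/
def SimpleIntegrand.BddBy {ℱ : Filtration ℝ m0} (Hs : SimpleIntegrand ℱ) (c : ℝ) : Prop :=
  ∀ t ω, |Hs.val t ω| ≤ c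

/-- The elementary stochastic integral `I_S(H) = ∑ H^i (S_{τ_{i+1}} - S_{τ_i})`. -/
def elemIntegral {ℱ : Filtration ℝ m0} (S : ℝ → Ω → ℝ) (Hs : SimpleIntegrand ℱ) (ω : Ω) : ℝ :=
  ∑ i : Fin Hs.k, Hs.H i ω * (S (Hs.τ i.succ ω) ω - S (Hs.τ i.castSucc ω) ω)

/-- `S` is a good integrator: `I_S` is continuous from the simple integrands (with the sup norm)
to `L⁰(P)`, i.e. `‖Hⁿ‖_∞ → 0` implies `I_S(Hⁿ) → 0` in probability. -/
def GoodIntegrator (ℱ : Filtration ℝ m0) (P : Measure Ω) (S : ℝ → Ω → ℝ) : Prop :=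
  ∀ (Hs : ℕ → SimpleIntegrand ℱ) (c : ℕ → ℝ),
    (∀ n, (Hs n).BddBy (c n)) → Tendsto c atTop (nhds 0) →
    TendstoInMeasure P (fun n => elemIntegral S (Hs n)) atTop 0

/-- A submartingale on the time interval `[0,1]`. -/
def SubmartingaleOn (ℱ : Filtration ℝ m0) (P : Measure Ω) (Y : ℝ → Ω → ℝ) : Prop :=
  AdaptedOn ℱ Y ∧ (∀ t ∈ Set.Icc (0:ℝ) 1, Integrable (Y t) P) ∧
    ∀ s t : ℝ, s ∈ Set.Icc (0:ℝ) 1 → t ∈ Set.Icc (0:ℝ) 1 → s ≤ t →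
      ∀ᵐ ω ∂P, Y s ω ≤ (P[Y t | ℱ s]) ω

/-- A martingale on the time interval `[0,1]`. -/
def MartingaleOn (ℱ : Filtration ℝ m0) (P : Measure Ω) (Y : ℝ → Ω → ℝ) : Prop :=
  AdaptedOn ℱ Y ∧ (∀ t ∈ Set.Icc (0:ℝ) 1, Integrable (Y t) P) ∧
    ∀ s t : ℝ, s ∈ Set.Icc (0:ℝ) 1 → t ∈ Set.Icc (0:ℝ) 1 → s ≤ t →
      (P[Y t | ℱ s]) =ᵐ[P] Y s

/-- A local martingale on `[0,1]`: for every `ε > 0` there is a `[0,1] ∪ {∞}`-valued stopping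
time `ρ` with `P(ρ = ∞) ≥ 1 - ε` such that the stopped process is a martingale. -/
def IsLocalMartingaleOn (ℱ : Filtration ℝ m0) (P : Measure Ω) (M : ℝ → Ω → ℝ) : Prop :=
  ∀ ε : ℝ, 0 < ε → ∃ ρ : Ω → WithTop ℝ, IsStoppingTimeTop ℱ ρ ∧ ValuedInUnitOrTop ρ ∧
    1 - ENNReal.ofReal ε ≤ P {ω | ρ ω = ⊤} ∧ MartingaleOn ℱ P (stopped M ρ)

/-- All paths of the process have finite total variation on `[0,1]`. -/
def FiniteVariationPaths (A : ℝ → Ω → ℝ) : Prop :=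
  ∀ ω, BoundedVariationOn (fun t => A t ω) (Set.Icc (0:ℝ) 1)

/-- `S` is a semimartingale on `[0,1]`: it is (up to indistinguishability on `[0,1]`) the sum
of a càdlàg local martingale and a càdlàg adapted process of finite variation. -/
def IsSemimartingaleOn (ℱ : Filtration ℝ m0) (P : Measure Ω) (S : ℝ → Ω → ℝ) : Prop :=
  ∃ M A : ℝ → Ω → ℝ, Cadlag M ∧ IsLocalMartingaleOn ℱ P M ∧
    Cadlag A ∧ AdaptedOn ℱ A ∧ FiniteVariationPaths A ∧
    ∀ᵐ ω ∂P, ∀ t ∈ Set.Icc (0:ℝ) 1, S t ω = M t ω + A t ω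

/-- A partition `0 = t_0 < t_1 < … < t_n = 1` of `[0,1]`. -/
structure Partition where
  n : ℕ
  t : Fin (n + 1) → ℝ
  strictMono : StrictMono t
  first : t 0 = 0
  last : t (Fin.last n) = 1

/-- The mean variation `Var(S, π) = E ∑_i |E[S_{t_{i+1}} - S_{t_i} | ℱ_{t_i}]|` of `S`
along the partition `π`. -/
def meanVar (ℱ : Filtration ℝ m0) (P : Measure Ω) (S : ℝ → Ω → ℝ) (π : Partition) : ℝ :=
  ∑ i : Fin π.n,
    ∫ ω, |(P[fun ω => S (π.t i.succ) ω - S (π.t i.castSucc) ω | ℱ (π.t i.castSucc)]) ω| ∂P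

/-- The `n`-th dyadic partition `{0, 1/2ⁿ, …, 1}` of `[0,1]`. -/
def dyadicPartition (n : ℕ) : Partition where
  n := 2 ^ n
  t := fun i => (i.val : ℝ) / 2 ^ n
  strictMono := by
    intro i j hij
    have h2 : (0:ℝ) < 2 ^ n := by positivity
    have h : (i.val : ℝ) < (j.val : ℝ) := by exact_mod_cast hij
    exact div_lt_div_of_pos_right h h2
  first := by simp
  last := by
    have h2 : (2:ℝ) ^ n ≠ 0 := by positivity
    simp [Fin.last, h2]

/-- The Riemann sum `∑_{i=0}^{2ⁿ-1} H_{i/2ⁿ} (S_{(i+1)/2ⁿ} - S_{i/2ⁿ})`. -/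
def riemannSum (S H : ℝ → Ω → ℝ) (n : ℕ) (ω : Ω) : ℝ :=
  ∑ i ∈ Finset.range (2 ^ n),
    H ((i : ℝ) / 2 ^ n) ω * (S (((i : ℝ) + 1) / 2 ^ n) ω - S ((i : ℝ) / 2 ^ n) ω)

/-- A bounded adapted process with continuous paths on `[0,1]`. -/
def BddContAdapted (ℱ : Filtration ℝ m0) (H : ℝ → Ω → ℝ) : Prop :=
  (∃ C : ℝ, ∀ t ∈ Set.Icc (0:ℝ) 1, ∀ ω, |H t ω| ≤ C) ∧ AdaptedOn ℱ H ∧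
    ∀ ω, ContinuousOn (fun t => H t ω) (Set.Icc (0:ℝ) 1)

/-- `S` is a Riemann integrator: for every bounded adapted continuous process `H`, the
Riemann sums along the dyadic partitions converge in probability. -/
def RiemannIntegrator (ℱ : Filtration ℝ m0) (P : Measure Ω) (S : ℝ → Ω → ℝ) : Prop :=
  ∀ H : ℝ → Ω → ℝ, BddContAdapted ℱ H →
    ∃ L : Ω → ℝ, TendstoInMeasure P (fun n => riemannSum S H n) atTop L

/-- An element of `ℰ_{D_n}`: a process `∑_{i=0}^{2ⁿ-1} H^i 1_{(i/2ⁿ, (i+1)/2ⁿ]}` with `H⁰ = 0`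
and `H^i` bounded and `ℱ_{(i-1)/2ⁿ}`-measurable for `1 ≤ i ≤ 2ⁿ - 1`. -/
structure DyadicIntegrand (ℱ : Filtration ℝ m0) where
  n : ℕ
  H : ℕ → Ω → ℝ
  H_zero : H 0 = fun _ => 0
  H_bdd : ∀ i, ∃ C : ℝ, ∀ ω, |H i ω| ≤ C
  H_meas : ∀ i : ℕ, 1 ≤ i → i < 2 ^ n →
    StronglyMeasurable[ℱ (((i : ℝ) - 1) / 2 ^ n)] (H i)

/-- The elementary integral of an element of `ℰ_{D_n}` against `S`. -/
def dyadicIntegral {ℱ : Filtration ℝ m0} (S : ℝ → Ω → ℝ) (D : DyadicIntegrand ℱ) (ω : Ω) : ℝ :=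
  ∑ i ∈ Finset.range (2 ^ D.n),
    D.H i ω * (S (((i : ℝ) + 1) / 2 ^ D.n) ω - S ((i : ℝ) / 2 ^ D.n) ω)

/-- `c` is a uniform bound for an element of `ℰ_{D_n}` (hence for its sup norm). -/
def DyadicIntegrand.BddBy {ℱ : Filtration ℝ m0} (D : DyadicIntegrand ℱ) (c : ℝ) : Prop :=
  ∀ i < 2 ^ D.n, ∀ ω, |D.H i ω| ≤ c

/-- The jump `ΔS_t = S_t - S_{t-}` of the process `S` at time `t`. -/
def jump (S : ℝ → Ω → ℝ) (t : ℝ) (ω : Ω) : ℝ :=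
  S t ω - Function.leftLim (fun s => S s ω) t

/-- The times `s ∈ (0, t]` at which `S` has a jump of size at least `1`. -/
def bigJumpTimes (S : ℝ → Ω → ℝ) (t : ℝ) (ω : Ω) : Set ℝ :=
  {s : ℝ | s ∈ Set.Ioc (0:ℝ) t ∧ 1 ≤ |jump S s ω|}

/-- The sum of the big jumps: `J_t = ∑_{0 < s ≤ t} ΔS_s 1_{|ΔS_s| ≥ 1}`. -/
def bigJumpPart (S : ℝ → Ω → ℝ) (t : ℝ) (ω : Ω) : ℝ :=
  ∑ᶠ s ∈ bigJumpTimes S t ω, jump S s ω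

/-!
Put `A_k = {ρ_k = ∞}`. Minimising the `L²(P)` norm over the convex hulls of the tails
`{1_{A_k} : k ≥ n}` yields forward convex combinations `g_n = ∑_k μ^n_k 1_{A_k}` with
`‖g_n - g_{n+1}‖₂` as small as we like. By Markov's inequality `g_0 ≥ 3/5` off a set of
probability `≤ 5ε/2`, and by Chebyshev's inequality the `g_n` move by at most `1/10` in total off
a set of probability `≤ ε/2`; so `g_n ≥ 1/2` for all `n` outside probability `3ε`.

The stopping time is the first `t ∈ [0,1]` at which some `∑_k μ^n_k 1_{[0,ρ_k]}(t)` drops below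
`1/2`. These processes are non-increasing and left-continuous in `t`, so they are still `≥ 1/2`
on `[0, ρ]`; they dominate `g_n`, so `ρ = ∞` wherever every `g_n ≥ 1/2`; and right continuity of
the filtration makes `ρ` a stopping time, since `{ρ < s}` is a countable union over rational
times below `s`.
-/

section ForwardConvexCombination

variable {E : Type*}

theorem Convex.norm_sub_sq_le_of_forall_le_norm_sq [SeminormedAddCommGroup E]
    [InnerProductSpace ℝ E] {C : Set E} (hC : Convex ℝ C) {a : ℝ} (ha : ∀ w ∈ C, a ≤ ‖w‖ ^ 2)
    {y z : E} (hy : y ∈ C) (hz : z ∈ C) :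
    ‖y - z‖ ^ 2 ≤ 2 * ‖y‖ ^ 2 + 2 * ‖z‖ ^ 2 - 4 * a := by
  have hmid : (1 / 2 : ℝ) • y + (1 / 2 : ℝ) • z ∈ C :=
    hC hy hz (by norm_num) (by norm_num) (by norm_num)
  have hnorm : ‖(1 / 2 : ℝ) • y + (1 / 2 : ℝ) • z‖ = ‖y + z‖ / 2 := by
    rw [← smul_add, norm_smul]; norm_num; ring
  have := ha _ hmid
  rw [hnorm] at this
  nlinarith [parallelogram_law_with_norm ℝ y z]

theorem exists_weights_of_mem_convexHull_image_Ici [AddCommGroup E] [Module ℝ E] {x : ℕ → E}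
    {n : ℕ} {y : E} (hy : y ∈ convexHull ℝ (x '' Ici n)) :
    ∃ (N : ℕ) (w : ℕ → ℝ), (∀ k ∈ Finset.Icc n N, 0 ≤ w k) ∧ ∑ k ∈ Finset.Icc n N, w k = 1 ∧
      ∑ k ∈ Finset.Icc n N, w k • x k = y := by
  classical
  obtain ⟨ι, _, v, z, hv_nonneg, hv_sum, hz, rfl⟩ := mem_convexHull_iff_exists_fintype.mp hy
  choose idx hidx_ge hidx using hz
  have hmaps : ∀ i ∈ Finset.univ, idx i ∈ Finset.Icc n (Finset.univ.sup idx) :=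
    fun i _ => Finset.mem_Icc.mpr ⟨hidx_ge i, Finset.le_sup (Finset.mem_univ i)⟩
  refine ⟨Finset.univ.sup idx, fun k => ∑ i with idx i = k, v i,
    fun k _ => Finset.sum_nonneg fun i _ => hv_nonneg i, ?_, ?_⟩
  · rw [Finset.sum_fiberwise_of_maps_to hmaps, hv_sum]
  · simp_rw [Finset.sum_smul]
    rw [← Finset.sum_fiberwise_of_maps_to hmaps]
    refine Finset.sum_congr rfl fun k _ => Finset.sum_congr rfl fun i hi => ?_
    rw [← hidx i, (Finset.mem_filter.mp hi).2]

theorem exists_mem_convexHull_image_Ici_norm_sub_sq_le [SeminormedAddCommGroup E]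
    [InnerProductSpace ℝ E] {x : ℕ → E} {C : ℝ} (hx : ∀ k, ‖x k‖ ≤ C) {δ : ℕ → ℝ}
    (hδ : ∀ i, 0 < δ i) (hδ_anti : Antitone δ) :
    ∃ y : ℕ → E, (∀ i, y i ∈ convexHull ℝ (x '' Ici i)) ∧ ∀ i, ‖y i - y (i + 1)‖ ^ 2 ≤ δ i := by
  set H : ℕ → Set E := fun n => convexHull ℝ (x '' Ici n)
  set a : ℕ → ℝ := fun n => sInf ((fun w => ‖w‖ ^ 2) '' H n)
  have hH_anti : Antitone H := fun m n hmn =>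
    convexHull_mono (image_mono (Ici_subset_Ici.mpr hmn))
  have hxH : ∀ n, x n ∈ H n :=
    fun n => subset_convexHull ℝ _ (mem_image_of_mem x (mem_Ici.mpr le_rfl))
  have hbdd : ∀ n, BddBelow ((fun w => ‖w‖ ^ 2) '' H n) :=
    fun n => ⟨0, forall_mem_image.mpr fun w _ => sq_nonneg ‖w‖⟩
  have ha_le : ∀ n, ∀ w ∈ H n, a n ≤ ‖w‖ ^ 2 :=
    fun n w hw => csInf_le (hbdd n) (mem_image_of_mem _ hw)
  have ha_mono : Monotone a := fun m n hmn =>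
    csInf_le_csInf (hbdd m) ((nonempty_of_mem (hxH n)).image _) (image_mono (hH_anti hmn))
  have ha_bdd : BddAbove (range a) := ⟨C ^ 2, forall_mem_range.mpr fun n =>
    (ha_le n _ (hxH n)).trans (pow_le_pow_left₀ (norm_nonneg _) (hx n) 2)⟩
  -- With `a` within `δ i / 6` of its supremum at `φ i` and `y i ∈ H (φ i)` a
  -- `δ i / 6`-minimiser, the parallelogram law gives
  -- `‖y i - y (i+1)‖² ≤ 2 (a (φ (i+1)) - a (φ i)) + δ i / 3 + δ (i+1) / 3`.
  have hδ6 : ∀ i, 0 < δ i / 6 := fun i => by linarith [hδ i]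
  obtain ⟨φ, hφ, hφ_close⟩ := extraction_forall_of_eventually fun i =>
    (tendsto_order.1 (tendsto_atTop_ciSup ha_mono ha_bdd)).1 _ (sub_lt_self _ (hδ6 i))
  have hnear : ∀ i, ∃ y ∈ H (φ i), ‖y‖ ^ 2 < a (φ i) + δ i / 6 := fun i => by
    obtain ⟨_, ⟨y, hy, rfl⟩, hlt⟩ :=
      Real.lt_sInf_add_pos ((nonempty_of_mem (hxH (φ i))).image _) (hδ6 i)
    exact ⟨y, hy, hlt⟩
  choose y hyH hy_norm using hnear
  refine ⟨y, fun i => hH_anti (hφ.id_le i) (hyH i), fun i => ?_⟩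
  have hpar := Convex.norm_sub_sq_le_of_forall_le_norm_sq (convex_convexHull ℝ _) (ha_le (φ i))
    (hyH i) (hH_anti (hφ.monotone i.le_succ) (hyH (i + 1)))
  linarith [le_ciSup ha_bdd (φ (i + 1)), ha_mono (hφ.monotone i.le_succ), hφ_close i, hy_norm i,
    hy_norm (i + 1), hδ_anti i.le_succ]

end ForwardConvexCombination

section IndicatorCombination

variable {P : Measure Ω}

theorem coeFn_sum_smul_indicatorConstLp {ι : Type*} {p : ENNReal} {A : ι → Set Ω}
    (hA : ∀ k, MeasurableSet (A k)) (hPA : ∀ k, P (A k) ≠ ⊤) (s : Finset ι) (w : ι → ℝ) :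
    ⇑(∑ k ∈ s, w k • indicatorConstLp p (hA k) (hPA k) (1 : ℝ)) =ᵐ[P]
      fun ω => ∑ k ∈ s, w k * (A k).indicator 1 ω := by
  classical
  induction s using Finset.induction_on with
  | empty => simp only [Finset.sum_empty]; exact Lp.coeFn_zero ℝ p P
  | insert k s hk ih =>
    simp only [Finset.sum_insert hk]
    filter_upwards [Lp.coeFn_add (w k • indicatorConstLp p (hA k) (hPA k) (1 : ℝ)) _,
      Lp.coeFn_smul (w k) (indicatorConstLp p (hA k) (hPA k) (1 : ℝ)),
      indicatorConstLp_coeFn (p := p) (hs := hA k) (hμs := hPA k) (c := (1 : ℝ)), ih]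
      with ω h_add h_smul h_ind h_sum
    rw [h_add, Pi.add_apply, h_smul, Pi.smul_apply, h_ind, h_sum, smul_eq_mul]
    rfl

theorem integral_sum_mul_indicator [IsFiniteMeasure P] {ι : Type*} {A : ι → Set Ω}
    (hA : ∀ k, MeasurableSet (A k)) (s : Finset ι) (w : ι → ℝ) :
    ∫ ω, ∑ k ∈ s, w k * (A k).indicator 1 ω ∂P = ∑ k ∈ s, w k * P.real (A k) := by
  rw [integral_finsetSum _ fun k _ => ((integrable_const 1).indicator (hA k)).const_mul _]
  exact Finset.sum_congr rfl fun k _ => by rw [integral_const_mul, integral_indicator_one (hA k)]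

theorem measure_le_abs_le_ofReal_norm_sq_div {f : Lp ℝ 2 P} {g : Ω → ℝ} (hfg : f =ᵐ[P] g)
    {η : ℝ} (hη : 0 < η) :
    P {ω | η ≤ |g ω|} ≤ ENNReal.ofReal (‖f‖ ^ 2 / η ^ 2) := by
  have h := Lp.mul_meas_ge_le_pow_enorm' f two_ne_zero ENNReal.ofNat_ne_top (ENNReal.ofReal η)
  have hset : {ω | ENNReal.ofReal η ≤ ‖f ω‖₊} =ᵐ[P] {ω | η ≤ |g ω|} := by
    filter_upwards [hfg] with ω hω
    change (ENNReal.ofReal η ≤ ‖f ω‖₊) = (η ≤ |g ω|)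
    rw [hω, ← enorm_eq_nnnorm, Real.enorm_eq_ofReal_abs,
      ENNReal.ofReal_le_ofReal_iff (abs_nonneg _)]
  rw [measure_congr hset, ENNReal.toReal_ofNat, ENNReal.rpow_two, ENNReal.rpow_two] at h
  rw [ENNReal.ofReal_div_of_pos (by positivity), ENNReal.ofReal_pow (norm_nonneg f),
    ENNReal.ofReal_pow hη.le, ENNReal.le_div_iff_mul_le (by simp [hη]) (by simp), mul_comm]
  exact h

theorem measure_lt_le_of_le_one [IsProbabilityMeasure P] {f : Ω → ℝ} (hf : Integrable f P)
    (hf_le : ∀ ω, f ω ≤ 1) {c : ℝ} (hc : c < 1) :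
    P {ω | f ω < c} ≤ ENNReal.ofReal ((1 - ∫ ω, f ω ∂P) / (1 - c)) := by
  have hmarkov := mul_meas_ge_le_integral_of_nonneg (ae_of_all P fun ω => sub_nonneg.mpr (hf_le ω))
    ((integrable_const 1).sub hf) (1 - c)
  rw [integral_sub (integrable_const 1) hf, integral_const, probReal_univ, one_smul] at hmarkov
  calc P {ω | f ω < c} ≤ P {ω | 1 - c ≤ 1 - f ω} :=
        measure_mono fun ω (hω : f ω < c) => show 1 - c ≤ 1 - f ω by linarith
    _ = ENNReal.ofReal (P.real {ω | 1 - c ≤ 1 - f ω}) := (ofReal_measureReal).symm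
    _ ≤ _ := ENNReal.ofReal_le_ofReal ((le_div_iff₀' (sub_pos.mpr hc)).mpr hmarkov)

theorem measure_sum_mul_indicator_lt_le [IsProbabilityMeasure P] {ι : Type*} {A : ι → Set Ω}
    (hA : ∀ k, MeasurableSet (A k)) {ε : ℝ} (hε : 0 ≤ ε)
    (hAP : ∀ k, 1 - ENNReal.ofReal ε ≤ P (A k)) {s : Finset ι} {w : ι → ℝ}
    (hw_nonneg : ∀ k ∈ s, 0 ≤ w k) (hw_sum : ∑ k ∈ s, w k = 1) {c : ℝ} (hc : c < 1) :
    P {ω | ∑ k ∈ s, w k * (A k).indicator 1 ω < c} ≤ ENNReal.ofReal (ε / (1 - c)) := by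
  have hA_real : ∀ k, 1 - ε ≤ P.real (A k) := fun k => by
    have := ENNReal.toReal_mono (by simp) (tsub_le_iff_right.mp (hAP k))
    rw [ENNReal.toReal_add (measure_ne_top P _) ENNReal.ofReal_ne_top,
      ENNReal.toReal_ofReal hε, ENNReal.toReal_one] at this
    rw [measureReal_def]
    linarith
  have hmean : 1 - ε ≤ ∫ ω, ∑ k ∈ s, w k * (A k).indicator 1 ω ∂P :=
    calc 1 - ε = ∑ k ∈ s, w k * (1 - ε) := by rw [← Finset.sum_mul, hw_sum, one_mul]
      _ ≤ ∑ k ∈ s, w k * P.real (A k) :=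
        Finset.sum_le_sum fun k hk => mul_le_mul_of_nonneg_left (hA_real k) (hw_nonneg k hk)
      _ = _ := (integral_sum_mul_indicator hA _ _).symm
  refine (measure_lt_le_of_le_one ?_ (fun ω => ?_) hc).trans
    (ENNReal.ofReal_le_ofReal (div_le_div_of_nonneg_right (by linarith) (sub_pos.mpr hc).le))
  · exact integrable_finsetSum _ fun k _ => ((integrable_const 1).indicator (hA k)).const_mul _
  · exact hw_sum ▸ Finset.sum_le_sum fun k hk => mul_le_of_le_one_right (hw_nonneg k hk)
      (indicator_le_self' (fun _ _ => zero_le_one) ω)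

end IndicatorCombination

theorem exists_forward_weights_measure_le_abs_sub_le (P : Measure Ω) [IsFiniteMeasure P]
    {A : ℕ → Set Ω} (hA : ∀ k, MeasurableSet (A k)) {δ : ℕ → ℝ} (hδ : ∀ i, 0 < δ i)
    (hδ_anti : Antitone δ) :
    ∃ (N : ℕ → ℕ) (μ : ℕ → ℕ → ℝ),
      (∀ n, (∀ k ∈ Finset.Icc n (N n), 0 ≤ μ n k) ∧ ∑ k ∈ Finset.Icc n (N n), μ n k = 1) ∧
      ∀ i {η : ℝ}, 0 < η → P {ω | η ≤ |∑ k ∈ Finset.Icc i (N i), μ i k * (A k).indicator 1 ω -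
        ∑ k ∈ Finset.Icc (i + 1) (N (i + 1)), μ (i + 1) k * (A k).indicator 1 ω|} ≤
          ENNReal.ofReal (δ i / η ^ 2) := by
  obtain ⟨y, hy, hy_close⟩ := exists_mem_convexHull_image_Ici_norm_sub_sq_le
    (x := fun k => indicatorConstLp 2 (hA k) (measure_ne_top P _) (1 : ℝ))
    (fun k => norm_indicatorConstLp_le.trans (by
      simpa using Real.rpow_le_rpow measureReal_nonneg (measureReal_mono (subset_univ (A k)))
        (by norm_num : (0 : ℝ) ≤ 1 / 2)))
    hδ hδ_anti
  choose N μ hμ_nonneg hμ_sum hμ_y using fun i => exists_weights_of_mem_convexHull_image_Ici (hy i)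
  have hy_ae : ∀ i, ⇑(y i) =ᵐ[P] fun ω => ∑ k ∈ Finset.Icc i (N i), μ i k * (A k).indicator 1 ω :=
    fun i => hμ_y i ▸ coeFn_sum_smul_indicatorConstLp hA _ _ _
  refine ⟨N, μ, fun n => ⟨hμ_nonneg n, hμ_sum n⟩, fun i η hη => ?_⟩
  refine (measure_le_abs_le_ofReal_norm_sq_div (f := y i - y (i + 1)) ?_ hη).trans
    (ENNReal.ofReal_le_ofReal (div_le_div_of_nonneg_right (hy_close i) (sq_nonneg η)))
  filter_upwards [Lp.coeFn_sub (y i) (y (i + 1)), hy_ae i, hy_ae (i + 1)] with ω h h1 h2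
  rw [h, Pi.sub_apply, h1, h2]

theorem exists_forward_weights_measure_exists_lt_half_le (P : Measure Ω) [IsProbabilityMeasure P]
    {A : ℕ → Set Ω} (hA : ∀ k, MeasurableSet (A k)) {ε : ℝ} (hε : 0 < ε)
    (hAP : ∀ k, 1 - ENNReal.ofReal ε ≤ P (A k)) :
    ∃ (N : ℕ → ℕ) (μ : ℕ → ℕ → ℝ),
      (∀ n, (∀ k ∈ Finset.Icc n (N n), 0 ≤ μ n k) ∧ ∑ k ∈ Finset.Icc n (N n), μ n k = 1) ∧
      P {ω | ∃ n, ∑ k ∈ Finset.Icc n (N n), μ n k * (A k).indicator 1 ω < 1 / 2} ≤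
        ENNReal.ofReal (3 * ε) := by
  -- the combinations start above `3/5` and then move by less than `η i`, with `∑ η i ≤ 1/10`
  set η : ℕ → ℝ := fun i => 1 / 20 * (1 / 2) ^ i with hη
  have hη_pos : ∀ i, 0 < η i := fun i => by positivity
  obtain ⟨N, μ, hμ, h_step⟩ := exists_forward_weights_measure_le_abs_sub_le P hA
    (δ := fun i => ε / 4 * (1 / 2) ^ i * η i ^ 2) (fun i => by have := hη_pos i; positivity)
    (fun i j hij => by
      have := pow_le_pow_of_le_one (by norm_num : (0 : ℝ) ≤ 1 / 2) (by norm_num) hij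
      simp only [hη]
      gcongr)
  set g : ℕ → Ω → ℝ := fun i ω => ∑ k ∈ Finset.Icc i (N i), μ i k * (A k).indicator 1 ω
  have h_chain : ∀ ω, 3 / 5 ≤ g 0 ω → (∀ i, |g i ω - g (i + 1) ω| < η i) → ∀ n, 1 / 2 ≤ g n ω := by
    intro ω h0 hstep n
    have htel : g 0 ω - g n ω ≤ ∑ i ∈ Finset.range n, η i := by
      rw [← Finset.sum_range_sub' (fun i => g i ω)]
      exact Finset.sum_le_sum fun i _ => (le_abs_self _).trans (hstep i).le
    have hgeom : ∑ i ∈ Finset.range n, η i ≤ 1 / 10 := by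
      rw [← Finset.mul_sum]; linarith [sum_geometric_two_le n]
    linarith
  refine ⟨N, μ, hμ, ?_⟩
  calc P {ω | ∃ n, g n ω < 1 / 2}
      ≤ P ({ω | g 0 ω < 3 / 5} ∪ ⋃ i, {ω | η i ≤ |g i ω - g (i + 1) ω|}) := by
        refine measure_mono fun ω ⟨n, hn⟩ => ?_
        by_contra h
        simp only [mem_union, mem_iUnion, mem_ofPred_eq, not_or, not_exists, not_le, not_lt] at h
        exact (h_chain ω h.1 h.2 n).not_gt hn
    _ ≤ P {ω | g 0 ω < 3 / 5} + ∑' i, P {ω | η i ≤ |g i ω - g (i + 1) ω|} :=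
        (measure_union_le _ _).trans (add_le_add_right (measure_iUnion_le _) _)
    _ ≤ ENNReal.ofReal (ε / (1 - 3 / 5)) + ∑' i, ENNReal.ofReal (ε / 4 * (1 / 2) ^ i) := by
        refine add_le_add (measure_sum_mul_indicator_lt_le hA hε.le hAP (hμ 0).1 (hμ 0).2
          (by norm_num)) (ENNReal.tsum_le_tsum fun i => (h_step i (hη_pos i)).trans_eq ?_)
        rw [mul_div_cancel_right₀ _ (pow_ne_zero 2 (hη_pos i).ne')]
    _ = ENNReal.ofReal (3 * ε) := by
        rw [← ENNReal.ofReal_tsum_of_nonneg (fun i => by positivity)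
            ((summable_geometric_of_lt_one (by norm_num) (by norm_num)).mul_left _),
          tsum_mul_left, tsum_geometric_of_lt_one (by norm_num) (by norm_num),
          ← ENNReal.ofReal_add (by positivity) (by positivity)]
        ring_nf

theorem isStoppingTimeTop_iff {ℱ : Filtration ℝ m0} {τ : Ω → WithTop ℝ} :
    IsStoppingTimeTop ℱ τ ↔ IsStoppingTime ℱ τ := Iff.rfl

theorem RightContinuousFiltration.isRightContinuous {ℱ : Filtration ℝ m0}
    (h : RightContinuousFiltration ℱ) : ℱ.IsRightContinuous :=
  ⟨fun t => by rw [Filtration.rightCont_eq, h t]; rfl⟩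

theorem ValuedInUnitOrTop.nonneg {τ : Ω → WithTop ℝ} (h : ValuedInUnitOrTop τ) (ω : Ω) :
    0 ≤ τ ω := by
  rcases h ω with h | ⟨t, ht, h⟩
  · simp [h]
  · exact h ▸ WithTop.coe_nonneg.mpr ht.1

theorem eventually_nhdsLT_sum_mul_ite_eq {ι : Type*} (s : Finset ι) (w : ι → ℝ)
    (r : ι → WithTop ℝ) (t : ℝ) :
    ∀ᶠ u : ℝ in 𝓝[<] t, (∑ k ∈ s, w k * if (u : WithTop ℝ) ≤ r k then (1 : ℝ) else 0) =
      ∑ k ∈ s, w k * if (t : WithTop ℝ) ≤ r k then (1 : ℝ) else 0 := by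
  have hiff : ∀ k ∈ s, ∀ᶠ u : ℝ in 𝓝[<] t, ((u : WithTop ℝ) ≤ r k ↔ (t : WithTop ℝ) ≤ r k) := by
    intro k _
    by_cases h : (t : WithTop ℝ) ≤ r k
    · filter_upwards [self_mem_nhdsWithin] with u (hu : u < t)
      exact iff_of_true ((WithTop.coe_le_coe.mpr hu.le).trans h) h
    · obtain ⟨v, hv⟩ := WithTop.ne_top_iff_exists.mp (ne_top_of_lt (not_le.mp h))
      have hvt : v < t := by rw [← WithTop.coe_lt_coe, hv]; exact not_le.mp h
      filter_upwards [Ioo_mem_nhdsLT hvt] with u hu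
      rw [← hv, WithTop.coe_le_coe, WithTop.coe_le_coe]
      exact iff_of_false (not_le.mpr hu.1) (not_le.mpr hvt)
  filter_upwards [(Filter.eventually_all_finset s).2 hiff] with u hu
  exact Finset.sum_congr rfl fun k hk => by simp only [hu k hk]

section DropTime

variable (ρ : ℕ → Ω → WithTop ℝ) (N : ℕ → ℕ) (μ : ℕ → ℕ → ℝ)

def forwardComb (n : ℕ) (t : ℝ) (ω : Ω) : ℝ :=
  ∑ k ∈ Finset.Icc n (N n), μ n k * if (t : WithTop ℝ) ≤ ρ k ω then 1 else 0

def dropSet (ω : Ω) : Set ℝ :=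
  {t | t ∈ Icc (0 : ℝ) 1 ∧ ∃ n, forwardComb ρ N μ n t ω < 1 / 2}

/-- As `sInf ∅ = ⊤` in `WithTop ℝ`, this is `⊤` when no forward combination drops below `1/2`. -/
def dropTime (ω : Ω) : WithTop ℝ :=
  sInf ((↑) '' dropSet ρ N μ ω)

variable {ρ N μ}

theorem forwardComb_nonneg (hμ : ∀ n, ∀ k ∈ Finset.Icc n (N n), 0 ≤ μ n k) (n : ℕ) (t : ℝ)
    (ω : Ω) : 0 ≤ forwardComb ρ N μ n t ω :=
  Finset.sum_nonneg fun k hk => mul_nonneg (hμ n k hk) (by split_ifs <;> norm_num)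

theorem forwardComb_zero {n : ℕ} {ω : Ω} (hρ : ∀ k, 0 ≤ ρ k ω)
    (hμ : ∑ k ∈ Finset.Icc n (N n), μ n k = 1) : forwardComb ρ N μ n 0 ω = 1 := by
  simp only [forwardComb, WithTop.coe_zero, hρ, if_true, mul_one, hμ]

theorem exists_rat_forwardComb_eq {t : ℝ} (ht : 0 < t) (n : ℕ) (ω : Ω) :
    ∃ q : ℚ, 0 < (q : ℝ) ∧ (q : ℝ) < t ∧ forwardComb ρ N μ n q ω = forwardComb ρ N μ n t ω := by
  obtain ⟨l, hlt, hl⟩ := (mem_nhdsLT_iff_exists_Ioo_subset.mp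
    ((eventually_nhdsLT_sum_mul_ite_eq _ (μ n) (fun k => ρ k ω) t).and (Ioo_mem_nhdsLT ht)))
  obtain ⟨q, hlq, hqt⟩ := exists_rat_btwn (max_lt hlt ht)
  have hq := hl ⟨(le_max_left _ _).trans_lt hlq, hqt⟩
  exact ⟨q, hq.2.1, hqt, hq.1⟩

theorem pos_of_mem_dropSet {ω : Ω} (hρ : ∀ k, 0 ≤ ρ k ω)
    (hμ : ∀ n, ∑ k ∈ Finset.Icc n (N n), μ n k = 1)
    {t : ℝ} (ht : t ∈ dropSet ρ N μ ω) : 0 < t := by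
  obtain ⟨⟨ht0, -⟩, n, hn⟩ := ht
  refine ht0.lt_of_ne fun h => ?_
  rw [← h, forwardComb_zero hρ (hμ n)] at hn
  norm_num at hn

theorem bddBelow_image_dropSet (ω : Ω) : BddBelow (((↑) : ℝ → WithTop ℝ) '' dropSet ρ N μ ω) :=
  ⟨0, forall_mem_image.mpr fun _ ht => WithTop.coe_nonneg.mpr ht.1.1⟩

theorem dropTime_lt_iff {ω : Ω} (hρ : ∀ k, 0 ≤ ρ k ω)
    (hμ : ∀ n, ∑ k ∈ Finset.Icc n (N n), μ n k = 1) (s : ℝ) :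
    dropTime ρ N μ ω < s ↔ ∃ (n : ℕ) (q : ℚ),
      (q : ℝ) ∈ Icc (0 : ℝ) 1 ∧ (q : ℝ) < s ∧ forwardComb ρ N μ n q ω < 1 / 2 := by
  constructor
  · intro h
    have hne : (((↑) : ℝ → WithTop ℝ) '' dropSet ρ N μ ω).Nonempty := by
      by_contra hne
      rw [dropTime, not_nonempty_iff_eq_empty.mp hne, WithTop.sInf_empty] at h
      exact not_top_lt h
    obtain ⟨_, ⟨t, ht, rfl⟩, hts⟩ := (csInf_lt_iff (bddBelow_image_dropSet ω) hne).mp h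
    obtain ⟨n, hn⟩ := ht.2
    obtain ⟨q, hq0, hqt, hq⟩ := exists_rat_forwardComb_eq (pos_of_mem_dropSet hρ hμ ht) n ω
    exact ⟨n, q, ⟨hq0.le, hqt.le.trans ht.1.2⟩, hqt.trans (WithTop.coe_lt_coe.mp hts), hq ▸ hn⟩
  · rintro ⟨n, q, hq, hqs, hn⟩
    exact (csInf_le (bddBelow_image_dropSet ω) (mem_image_of_mem _ ⟨hq, n, hn⟩)).trans_lt
      (WithTop.coe_lt_coe.mpr hqs)

theorem ite_le_two_mul_forwardComb {ω : Ω} (hρ : ∀ k, 0 ≤ ρ k ω)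
    (hμ_nonneg : ∀ n, ∀ k ∈ Finset.Icc n (N n), 0 ≤ μ n k)
    (hμ : ∀ n, ∑ k ∈ Finset.Icc n (N n), μ n k = 1) (n : ℕ) {t : ℝ} (ht : t ∈ Icc (0 : ℝ) 1) :
    (if (t : WithTop ℝ) ≤ dropTime ρ N μ ω then (1 : ℝ) else 0) ≤
      2 * forwardComb ρ N μ n t ω := by
  split_ifs with h
  · by_contra! hlt
    have htn : forwardComb ρ N μ n t ω < 1 / 2 := by linarith
    obtain ⟨q, hq0, hqt, hq⟩ :=
      exists_rat_forwardComb_eq (pos_of_mem_dropSet hρ hμ ⟨ht, n, htn⟩) n ω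
    exact h.not_gt ((dropTime_lt_iff hρ hμ t).mpr
      ⟨n, q, ⟨hq0.le, hqt.le.trans ht.2⟩, hqt, hq ▸ htn⟩)
  · linarith [forwardComb_nonneg (ρ := ρ) hμ_nonneg n t ω]

theorem valuedInUnitOrTop_dropTime : ValuedInUnitOrTop (dropTime ρ N μ) := by
  intro ω
  rcases (dropSet ρ N μ ω).eq_empty_or_nonempty with h | h
  · left; rw [dropTime, h, image_empty, WithTop.sInf_empty]
  · obtain ⟨t, ht⟩ := h
    have hbdd : BddBelow (dropSet ρ N μ ω) := ⟨0, fun _ hs => hs.1.1⟩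
    exact Or.inr ⟨sInf (dropSet ρ N μ ω), ⟨le_csInf ⟨t, ht⟩ fun _ hs => hs.1.1,
      (csInf_le hbdd ht).trans ht.1.2⟩, (WithTop.coe_sInf' ⟨t, ht⟩ hbdd).symm⟩

theorem dropTime_eq_top {ω : Ω} (hμ_nonneg : ∀ n, ∀ k ∈ Finset.Icc n (N n), 0 ≤ μ n k)
    (h : ∀ n, 1 / 2 ≤ ∑ k ∈ Finset.Icc n (N n), μ n k * {ω | ρ k ω = ⊤}.indicator 1 ω) :
    dropTime ρ N μ ω = ⊤ := by
  suffices dropSet ρ N μ ω = ∅ by rw [dropTime, this, image_empty, WithTop.sInf_empty]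
  refine eq_empty_of_forall_notMem fun t ⟨_, n, hn⟩ => (h n).not_gt (hn.trans_le' ?_)
  refine Finset.sum_le_sum fun k hk => mul_le_mul_of_nonneg_left ?_ (hμ_nonneg n k hk)
  rcases eq_or_ne (ρ k ω) ⊤ with hk | hk
  · simp [hk]
  · rw [indicator_of_notMem (s := {ω | ρ k ω = ⊤}) hk]
    split_ifs <;> norm_num

theorem measurable_forwardComb {ℱ : Filtration ℝ m0} (hρ : ∀ k, IsStoppingTimeTop ℱ (ρ k))
    (n : ℕ) (t : ℝ) : Measurable[ℱ t] (forwardComb ρ N μ n t) :=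
  Finset.measurable_sum _ fun k _ => (Measurable.ite
    ((isStoppingTimeTop_iff.mp (hρ k)).measurableSet_ge t) measurable_const
    measurable_const).const_mul _

theorem isStoppingTimeTop_dropTime {ℱ : Filtration ℝ m0} (hℱ : RightContinuousFiltration ℱ)
    (hρ_stop : ∀ k, IsStoppingTimeTop ℱ (ρ k)) (hρ : ∀ k ω, 0 ≤ ρ k ω)
    (hμ : ∀ n, ∑ k ∈ Finset.Icc n (N n), μ n k = 1) : IsStoppingTimeTop ℱ (dropTime ρ N μ) := by
  have := hℱ.isRightContinuous
  refine isStoppingTimeTop_iff.mpr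
    (isStoppingTime_of_measurableSet_lt_of_isRightContinuous fun s => ?_)
  simp_rw [dropTime_lt_iff (hρ · _) hμ, ofPred_exists]
  refine MeasurableSet.iUnion fun n => MeasurableSet.iUnion fun q => ?_
  by_cases hq : (q : ℝ) ∈ Icc (0 : ℝ) 1 ∧ (q : ℝ) < s
  · simp only [hq, true_and]
    exact ℱ.mono hq.2.le _ (measurableSet_lt (measurable_forwardComb hρ_stop n q) measurable_const)
  · simp only [← and_assoc, hq, false_and, ofPred_false, MeasurableSet.empty]

end DropTime

/-- Given stopping times `(ρ_n)` with `P(ρ_n = ∞) ≥ 1 - ε`, there are a stopping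
time `ρ` with `P(ρ = ∞) ≥ 1 - 3ε` and forward convex weights such that
`1_{[0,ρ]} ≤ 2 ∑_{k=n}^{N_n} μ_k^n 1_{[0,ρ_k]}` pointwise, for every `n`. -/
theorem exists_limit_stopping_time
    (ℱ : Filtration ℝ m0) (P : Measure Ω) [IsProbabilityMeasure P]
    (hUC : UsualConditions ℱ P)
    (ε : ℝ) (hε : 0 < ε) (ρ : ℕ → Ω → WithTop ℝ)
    (hρ_stop : ∀ n, IsStoppingTimeTop ℱ (ρ n))
    (hρ_val : ∀ n, ValuedInUnitOrTop (ρ n))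
    (hρ_P : ∀ n, 1 - ENNReal.ofReal ε ≤ P {ω | ρ n ω = ⊤}) :
    ∃ (ρ' : Ω → WithTop ℝ) (N : ℕ → ℕ) (μ : ℕ → ℕ → ℝ),
      IsStoppingTimeTop ℱ ρ' ∧ ValuedInUnitOrTop ρ' ∧
      1 - ENNReal.ofReal (3 * ε) ≤ P {ω | ρ' ω = ⊤} ∧
      ∀ n : ℕ, n ≤ N n ∧ (∀ k ∈ Finset.Icc n (N n), 0 ≤ μ n k) ∧
        (∑ k ∈ Finset.Icc n (N n), μ n k = 1) ∧
        ∀ t ∈ Set.Icc (0:ℝ) 1, ∀ ω,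
          (if (t : WithTop ℝ) ≤ ρ' ω then (1:ℝ) else 0) ≤
            2 * ∑ k ∈ Finset.Icc n (N n),
              μ n k * (if (t : WithTop ℝ) ≤ ρ k ω then (1:ℝ) else 0) := by
  obtain ⟨N, μ, hμ, hbad⟩ := exists_forward_weights_measure_exists_lt_half_le P
    (fun k => (isStoppingTimeTop_iff.mp (hρ_stop k)).measurableSet_eq_top) hε hρ_P
  have hμ_nonneg := fun n => (hμ n).1
  have hμ_sum := fun n => (hμ n).2
  have hρ_nonneg := fun k => (hρ_val k).nonneg
  refine ⟨dropTime ρ N μ, N, μ, isStoppingTimeTop_dropTime hUC.1 hρ_stop hρ_nonneg hμ_sum,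
    valuedInUnitOrTop_dropTime, ?_, fun n => ⟨?_, hμ_nonneg n, hμ_sum n,
      fun t ht ω => ite_le_two_mul_forwardComb (hρ_nonneg · ω) hμ_nonneg hμ_sum n ht⟩⟩
  · have hsub : {ω | dropTime ρ N μ ω = ⊤}ᶜ ⊆
        {ω | ∃ n, ∑ k ∈ Finset.Icc n (N n), μ n k * {ω | ρ k ω = ⊤}.indicator 1 ω < 1 / 2} :=
      fun ω hω => by
        by_contra h
        simp only [mem_ofPred_eq, not_exists, not_lt] at h
        exact hω (dropTime_eq_top hμ_nonneg h)
    rw [tsub_le_iff_right, ← measure_univ (μ := P)]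
    exact (measure_univ_le_add_compl _).trans (add_le_add_right ((measure_mono hsub).trans hbad) _)
  · exact Finset.nonempty_Icc.mp (Finset.nonempty_of_sum_ne_zero ((hμ_sum n).trans_ne one_ne_zero))

end BD
end
end

section
/- Let S be a Riemann integrator. Then for every ε > 0 there exists C > 0 such that P(|I_S(K^{D_n})| ≥ C) ≤ ε for all n ≥ 1 and all bounded continuous adapted processes K with ‖K‖_∞ ≤ 1, where K^{D_n} := Σ_{i=0}^{2^n−1} K_{i/2^n} · 1_{(i/2^n, (i+1)/2^n]} and I_S(K^{D_n}) = Σ_{i=0}^{2^n−1} K_{i/2^n} (S_{(i+1)/2^n} − S_{i/2^n}). -/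
/-! Uniform boundedness in probability is the Banach–Steinhaus theorem for operators into `L⁰`.
Bounded adapted processes with continuous paths form a Banach space under
`sup_{t,ω} |K_t(ω)|`, on which each Riemann-sum operator `I_n` is linear and, for fixed `ω`,
continuous. The Riemann sums of each such process converge in probability, hence are bounded in
probability. By continuity of measure from below the sets
`{K | ∀ n, P(|I_n K| > C) ≤ η}` are closed; they cover the space, so by Baire one of them
contains a ball, and linearity transfers the bound from that ball to the unit ball. -/

open MeasureTheory Set Filter Topology

noncomputable section

namespace BD

variable {Ω : Type*} {m0 : MeasurableSpace Ω}

open scoped ENNReal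

def BoundedInProbability {ι : Type*} (P : Measure Ω) (X : ι → Ω → ℝ) : Prop :=
  ∀ η : ℝ≥0∞, 0 < η → ∃ C : ℝ, ∀ i, P {ω | C ≤ |X i ω|} ≤ η

section BoundedInProbability

variable {ι : Type*} {P : Measure Ω}

lemma tendsto_measure_le_abs_atTop [IsFiniteMeasure P] {f : Ω → ℝ} (hf : AEMeasurable f P) :
    Tendsto (fun C : ℝ => P {ω | C ≤ |f ω|}) atTop (𝓝 0) := by
  have hempty : ⋂ C : ℝ, {ω | C ≤ |f ω|} = ∅ :=
    eq_empty_of_forall_notMem fun ω hω => by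
      have hle : |f ω| + 1 ≤ |f ω| := mem_iInter.1 hω (|f ω| + 1)
      linarith
  simpa [Function.comp_def, hempty] using
    tendsto_measure_iInter_atTop (μ := P) (fun C => nullMeasurableSet_le aemeasurable_const hf.abs)
      (fun C C' hCC' ω (hω : C' ≤ |f ω|) => hCC'.trans hω) ⟨0, measure_ne_top P _⟩

lemma boundedInProbability_of_tendstoInMeasure [IsFiniteMeasure P] {X : ℕ → Ω → ℝ} {L : Ω → ℝ}
    (hX : ∀ n, AEMeasurable (X n) P) (hXL : TendstoInMeasure P X atTop L) :
    BoundedInProbability P X := by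
  intro η hη
  have hη2 : 0 < η / 2 := ENNReal.half_pos hη.ne'
  obtain ⟨N, hN⟩ := eventually_atTop.1 <|
    ((hXL 1 one_pos).eventually (gt_mem_nhds hη2))
  have hL := tendsto_measure_le_abs_atTop (hXL.aemeasurable hX)
  obtain ⟨C, hCL, hCX⟩ := ((hL.eventually (gt_mem_nhds hη2)).and (eventually_all_finite
    (finite_Iio N) |>.2 fun n _ => (tendsto_measure_le_abs_atTop (hX n)).eventually
      (gt_mem_nhds hη))).exists
  refine ⟨C + 1, fun n => ?_⟩
  rcases lt_or_ge n N with hn | hn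
  · exact (measure_mono fun ω (hω : C + 1 ≤ |X n ω|) => show C ≤ |X n ω| by linarith).trans
      (hCX n hn).le
  have hsub : {ω | C + 1 ≤ |X n ω|} ⊆ {ω | 1 ≤ edist (X n ω) (L ω)} ∪ {ω | C ≤ |L ω|} := by
    intro ω (hω : C + 1 ≤ |X n ω|)
    by_contra! h
    simp only [mem_union, mem_ofPred_eq, not_or, not_le, edist_dist, Real.dist_eq,
      ENNReal.ofReal_lt_one] at h
    linarith [abs_sub_abs_le_abs_sub (X n ω) (L ω)]
  calc P {ω | C + 1 ≤ |X n ω|}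
      ≤ P {ω | 1 ≤ edist (X n ω) (L ω)} + P {ω | C ≤ |L ω|} :=
        (measure_mono hsub).trans (measure_union_le _ _)
    _ ≤ η / 2 + η / 2 := add_le_add (hN n hn).le hCL.le
    _ = η := ENNReal.add_halves η

end BoundedInProbability

/-- Continuity from below along a countable neighbourhood basis. -/
lemma lowerSemicontinuous_measure_of_isOpen {X : Type*} [TopologicalSpace X]
    [FirstCountableTopology X] (μ : Measure Ω) {U : X → Set Ω}
    (hU : ∀ ω, IsOpen {x | ω ∈ U x}) : LowerSemicontinuous fun x => μ (U x) := by
  intro x y hy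
  obtain ⟨s, hs⟩ := (𝓝 x).exists_antitone_basis
  let W : ℕ → Set Ω := fun k => {ω | ∀ x' ∈ s k, ω ∈ U x'}
  have hW_mono : Monotone W := fun k l hkl ω hω x' hx' => hω x' (hs.antitone hkl hx')
  have hUW : U x ⊆ ⋃ k, W k := fun ω hω =>
    mem_iUnion.2 (hs.mem_iff.1 ((hU ω).mem_nhds hω))
  obtain ⟨k, hk⟩ := lt_iSup_iff.1 <| hW_mono.measure_iUnion (μ := μ) ▸
    hy.trans_le (measure_mono hUW)
  filter_upwards [hs.mem k] with x' hx' using hk.trans_le (measure_mono fun ω hω => hω x' hx')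

theorem banach_steinhaus_inProbability {ι E : Type*} [NormedAddCommGroup E] [NormedSpace ℝ E]
    [CompleteSpace E] {P : Measure Ω} (T : ι → E →ₗ[ℝ] Ω → ℝ)
    (hT : ∀ i ω, Continuous fun x => T i x ω) (hbdd : ∀ x, BoundedInProbability P fun i => T i x) :
    BoundedInProbability P fun p : ι × Metric.closedBall (0 : E) 1 => T p.1 p.2 := by
  intro η hη
  have hη2 : 0 < η / 2 := ENNReal.half_pos hη.ne'
  let F : ℕ → Set E := fun C => {x | ∀ i, P {ω | C < |T i x ω|} ≤ η / 2}
  have hF_closed : ∀ C, IsClosed (F C) := fun C => by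
    simp only [F, ofPred_forall]
    exact isClosed_iInter fun i => (lowerSemicontinuous_measure_of_isOpen P
      fun ω => isOpen_lt continuous_const (hT i ω).abs).isClosed_preimage _
  have hF_cover : ⋃ C, F C = univ := eq_univ_of_forall fun x => by
    obtain ⟨C, hC⟩ := hbdd x _ hη2
    obtain ⟨k, hk⟩ := exists_nat_ge C
    exact mem_iUnion.2 ⟨k, fun i => (measure_mono fun ω (hω : (k : ℝ) < |T i x ω|) =>
      show C ≤ |T i x ω| by linarith).trans (hC i)⟩
  obtain ⟨C, x₀, hx₀⟩ := nonempty_interior_of_iUnion_of_closed hF_closed hF_cover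
  obtain ⟨r, hr, hball⟩ := Metric.isOpen_iff.1 isOpen_interior x₀ hx₀
  -- `(r / 2) • T i y = T i (x₀ + (r / 2) • y) - T i x₀`, and both points lie in `F C`
  refine ⟨4 * C / r + 1, fun ⟨i, y, hy⟩ => ?_⟩
  have hy : ‖y‖ ≤ 1 := by simpa using hy
  have hx₀y : x₀ + (r / 2) • y ∈ F C := interior_subset <| hball <| by
    rw [Metric.mem_ball, dist_self_add_left, norm_smul, Real.norm_of_nonneg (by positivity)]
    nlinarith [norm_nonneg y]
  have hsub : {ω | 4 * C / r + 1 ≤ |T i y ω|} ⊆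
      {ω | (C : ℝ) < |T i (x₀ + (r / 2) • y) ω|} ∪ {ω | (C : ℝ) < |T i x₀ ω|} := by
    intro ω (hω : 4 * C / r + 1 ≤ |T i y ω|)
    by_contra! h
    simp only [mem_union, mem_ofPred_eq, not_or, not_lt, map_add, map_smul, Pi.add_apply,
      Pi.smul_apply, smul_eq_mul] at h
    have h2C : r / 2 * |T i y ω| ≤ 2 * C := by
      rw [← abs_of_pos (half_pos hr), ← abs_mul, ← add_sub_cancel_left (T i x₀ ω) (r / 2 * _)]
      linarith [abs_sub (T i x₀ ω + r / 2 * T i y ω) (T i x₀ ω)]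
    have : r / 2 * (4 * C / r + 1) ≤ r / 2 * |T i y ω| :=
      mul_le_mul_of_nonneg_left hω (by positivity)
    field_simp at this
    linarith
  calc P {ω | 4 * C / r + 1 ≤ |T i y ω|}
      ≤ P {ω | (C : ℝ) < |T i (x₀ + (r / 2) • y) ω|} + P {ω | (C : ℝ) < |T i x₀ ω|} :=
        (measure_mono hsub).trans (measure_union_le _ _)
    _ ≤ η / 2 + η / 2 := add_le_add (hx₀y i) (interior_subset hx₀ i)
    _ = η := ENNReal.add_halves η

lemma div_two_pow_mem_Icc {i n : ℕ} (h : i ≤ 2 ^ n) : (i : ℝ) / 2 ^ n ∈ Icc (0 : ℝ) 1 :=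
  ⟨by positivity, (div_le_one (by positivity)).2 (by exact_mod_cast h)⟩

lemma succ_div_two_pow_mem_Icc {i n : ℕ} (h : i < 2 ^ n) :
    ((i : ℝ) + 1) / 2 ^ n ∈ Icc (0 : ℝ) 1 := by
  exact_mod_cast div_two_pow_mem_Icc (Nat.succ_le_of_lt h)

lemma riemannSum_congr {S H G : ℝ → Ω → ℝ} (h : ∀ t ∈ Icc (0 : ℝ) 1, H t = G t) (n : ℕ) :
    riemannSum S H n = riemannSum S G n := by
  ext ω
  refine Finset.sum_congr rfl fun i hi => ?_
  rw [h _ (div_two_pow_mem_Icc (Finset.mem_range.1 hi).le)]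

lemma measurable_riemannSum {S H : ℝ → Ω → ℝ} (hS : ∀ t ∈ Icc (0 : ℝ) 1, Measurable (S t))
    (hH : ∀ t ∈ Icc (0 : ℝ) 1, Measurable (H t)) (n : ℕ) : Measurable (riemannSum S H n) := by
  refine Finset.measurable_sum _ fun i hi => ?_
  have hi := Finset.mem_range.1 hi
  exact (hH _ (div_two_pow_mem_Icc hi.le)).mul
    ((hS _ (succ_div_two_pow_mem_Icc hi)).sub (hS _ (div_two_pow_mem_Icc hi.le)))

def riemannSumₗ (S : ℝ → Ω → ℝ) (n : ℕ) : (ℝ → Ω → ℝ) →ₗ[ℝ] Ω → ℝ where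
  toFun H := riemannSum S H n
  map_add' H G := by
    ext ω
    simp only [riemannSum, Pi.add_apply, add_mul, Finset.sum_add_distrib]
  map_smul' c H := by
    ext ω
    simp only [riemannSum, Pi.smul_apply, smul_eq_mul, Finset.mul_sum, mul_assoc, RingHom.id_apply]

/-- Bounded processes with continuous paths on `[0,1]`, normed by `sup_{t,ω} |K_t(ω)|`. -/
abbrev BoundedPaths (Ω : Type*) := lp (fun _ : Ω => C(Icc (0 : ℝ) 1, ℝ)) ∞

namespace BoundedPaths

def toProcessₗ : BoundedPaths Ω →ₗ[ℝ] ℝ → Ω → ℝ where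
  toFun K t ω := IccExtend zero_le_one (K ω) t
  map_add' K L := by
    ext t ω
    simp [IccExtend]
  map_smul' c K := by
    ext t ω
    simp [IccExtend]

lemma continuous_riemannSum_toProcess_apply (S : ℝ → Ω → ℝ) (n : ℕ) (ω : Ω) :
    Continuous fun K : BoundedPaths Ω => riemannSum S (toProcessₗ K) n ω := by
  refine continuous_finsetSum _ fun i _ => Continuous.mul ?_ continuous_const
  exact (continuous_eval_const _).comp (lp.lipschitzWith_one_eval ∞ ω).continuous

variable (ℱ : Filtration ℝ m0)

def adapted : Submodule ℝ (BoundedPaths Ω) where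
  carrier := {K | ∀ t : Icc (0 : ℝ) 1, StronglyMeasurable[ℱ t] fun ω => K ω t}
  zero_mem' t := by simpa using stronglyMeasurable_const
  add_mem' hK hL t := (hK t).add (hL t)
  smul_mem' c K hK t := (hK t).const_smul c

lemma isClosed_adapted : IsClosed (adapted ℱ : Set (BoundedPaths Ω)) := by
  refine isClosed_of_closure_subset fun K hK t => ?_
  obtain ⟨Kₘ, hKₘ, hlim⟩ := mem_closure_iff_seq_limit.1 hK
  refine stronglyMeasurable_of_tendsto atTop (fun m => hKₘ m t) (tendsto_pi_nhds.2 fun ω => ?_)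
  exact ((continuous_eval_const t).comp
    (lp.lipschitzWith_one_eval ∞ ω).continuous).continuousAt.tendsto.comp hlim

instance : CompleteSpace (adapted ℱ) := (isClosed_adapted ℱ).completeSpace_coe

variable {ℱ}

lemma bddContAdapted_toProcess {K : BoundedPaths Ω} (hK : K ∈ adapted ℱ) :
    BddContAdapted ℱ (toProcessₗ K) := by
  refine ⟨⟨‖K‖, fun t _ ω => ?_⟩, fun t ht => ?_, fun ω => ?_⟩
  · exact ((K ω).norm_coe_le_norm _).trans (lp.norm_apply_le_norm ENNReal.top_ne_zero K ω)
  · simpa [toProcessₗ, IccExtend_of_mem _ _ ht] using hK ⟨t, ht⟩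
  · exact (K ω).continuous.Icc_extend'.continuousOn

end BoundedPaths

def BddContAdapted.toBoundedPaths {ℱ : Filtration ℝ m0} {K : ℝ → Ω → ℝ}
    (hK : BddContAdapted ℱ K) : BoundedPaths Ω :=
  ⟨fun ω => ⟨fun t => K t ω, (hK.2.2 ω).domRestrict⟩, memℓp_infty <| by
    obtain ⟨C, hC⟩ := hK.1
    refine ⟨max C 0, forall_mem_range.2 fun ω => ?_⟩
    exact (ContinuousMap.norm_le _ (le_max_right _ _)).2 fun t =>
      (hC t t.2 ω).trans (le_max_left _ _)⟩

namespace BddContAdapted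

variable {ℱ : Filtration ℝ m0} {K : ℝ → Ω → ℝ} (hK : BddContAdapted ℱ K)

lemma toBoundedPaths_mem_adapted : hK.toBoundedPaths ∈ BoundedPaths.adapted ℱ :=
  fun t => hK.2.1 t t.2

lemma norm_toBoundedPaths_le {c : ℝ} (hc : 0 ≤ c) (hKc : ∀ t ∈ Icc (0 : ℝ) 1, ∀ ω, |K t ω| ≤ c) :
    ‖hK.toBoundedPaths‖ ≤ c :=
  lp.norm_le_of_forall_le hc fun ω => (ContinuousMap.norm_le _ hc).2 fun t => hKc t t.2 ω

lemma riemannSum_toProcess_toBoundedPaths (S : ℝ → Ω → ℝ) (n : ℕ) :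
    riemannSum S (BoundedPaths.toProcessₗ hK.toBoundedPaths) n = riemannSum S K n :=
  riemannSum_congr (fun t ht => by
    ext ω
    simp only [BoundedPaths.toProcessₗ, LinearMap.coe_mk, AddHom.coe_mk, IccExtend_of_mem _ _ ht]
    rfl) n

end BddContAdapted

theorem riemannIntegrator_uniform_bound_general
    (ℱ : Filtration ℝ m0) (P : Measure Ω) [IsProbabilityMeasure P]
    (S : ℝ → Ω → ℝ)
    (hS_adapted : AdaptedOn ℱ S)
    (hS_riemann : RiemannIntegrator ℱ P S) :
    ∀ ε : ℝ, 0 < ε → ∃ C : ℝ, 0 < C ∧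
      ∀ n : ℕ, 1 ≤ n → ∀ K : ℝ → Ω → ℝ, BddContAdapted ℱ K →
        (∀ t ∈ Set.Icc (0:ℝ) 1, ∀ ω, |K t ω| ≤ 1) →
        P {ω | C ≤ |riemannSum S K n ω|} ≤ ENNReal.ofReal ε := by
  intro ε hε
  have hS : ∀ t ∈ Icc (0 : ℝ) 1, Measurable (S t) := fun t ht =>
    ((hS_adapted t ht).mono (ℱ.le t)).measurable
  let T : ℕ → BoundedPaths.adapted ℱ →ₗ[ℝ] Ω → ℝ := fun n =>
    (riemannSumₗ S n).comp (BoundedPaths.toProcessₗ.comp (BoundedPaths.adapted ℱ).subtype)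
  have hT_bdd : ∀ K, BoundedInProbability P fun n => T n K := fun K => by
    have hK := BoundedPaths.bddContAdapted_toProcess K.2
    obtain ⟨L, hL⟩ := hS_riemann _ hK
    refine boundedInProbability_of_tendstoInMeasure
      (fun n => (measurable_riemannSum hS (fun t ht => ?_) n).aemeasurable) hL
    exact ((hK.2.1 t ht).mono (ℱ.le t)).measurable
  obtain ⟨C, hC⟩ := banach_steinhaus_inProbability T
    (fun n ω => (BoundedPaths.continuous_riemannSum_toProcess_apply S n ω).comp
      continuous_subtype_val) hT_bdd _ (ENNReal.ofReal_pos.2 hε)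
  refine ⟨max C 1, by positivity, fun n _ K hK hK₁ => ?_⟩
  have hK_ball : (⟨hK.toBoundedPaths, hK.toBoundedPaths_mem_adapted⟩ : BoundedPaths.adapted ℱ) ∈
      Metric.closedBall 0 1 := by
    rw [mem_closedBall_zero_iff]
    exact hK.norm_toBoundedPaths_le zero_le_one hK₁
  refine (measure_mono fun ω (hω : max C 1 ≤ |riemannSum S K n ω|) => ?_).trans
    (hC (n, ⟨_, hK_ball⟩))
  show C ≤ |riemannSum S (BoundedPaths.toProcessₗ hK.toBoundedPaths) n ω|
  rw [hK.riemannSum_toProcess_toBoundedPaths]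
  exact (le_max_left _ _).trans hω

/-- If `S` is a Riemann integrator then the Riemann-sum operators are uniformly
bounded in probability over the unit ball of bounded continuous adapted processes. -/
theorem riemannIntegrator_uniform_bound
    (ℱ : Filtration ℝ m0) (P : Measure Ω) [IsProbabilityMeasure P]
    (hUC : UsualConditions ℱ P) (S : ℝ → Ω → ℝ)
    (hS_cadlag : Cadlag S) (hS_adapted : AdaptedOn ℱ S)
    (hS_riemann : RiemannIntegrator ℱ P S) :
    ∀ ε : ℝ, 0 < ε → ∃ C : ℝ, 0 < C ∧
      ∀ n : ℕ, 1 ≤ n → ∀ K : ℝ → Ω → ℝ, BddContAdapted ℱ K →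
        (∀ t ∈ Set.Icc (0:ℝ) 1, ∀ ω, |K t ω| ≤ 1) →
        P {ω | C ≤ |riemannSum S K n ω|} ≤ ENNReal.ofReal ε :=
  riemannIntegrator_uniform_bound_general ℱ P S hS_adapted hS_riemann

end BD
end
end
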